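/- Let Γ be a group, N a normal subgroup of finite index K, Q = Γ/N the finite quotient with projection π : Γ → Q, and s : Q → Γ a section of π with s(1) = 1; for μ ∈ Γ and B ∈ Q set ρ_μ(B) = s(B)·μ·s(B·π(μ))⁻¹ ∈ N. Let D ≥ 0 and let (H_i)_{i∈ℕ} be functions H_i : N → ℝ with defect at most D, such that for every ν ∈ N there is C(ν) with |H_i(ν)| ≤ C(ν) for all i. Let (f_i)_{i∈ℕ} be elements of the commutator subgroup [N,N] such that: (a) for all i > j, all B ∈ Q and all integers d ≥ 1, H_i(s(B)·f_j^d·s(B)⁻¹) = 0; (b) for all i, all B ∈ Q and all d ≥ 1, H_i(s(B)·f_i^d·s(B)⁻¹) ≥ 0; (c) for every i, sup_{d ≥ 1} H_i(f_i^d) = ∞. Then for every real sequence t = (t_i) with Σ_i |t_i| < ∞ that is not identically zero, the function h_t : Γ → ℝ given by h_t(μ) = Σ_i t_i·Σ_{B∈Q} H_i(ρ_μ(B)) is well defined (the series converges absolutely), is a quasimorphism with defect at most K·D·Σ_i|t_i|, and for every group homomorphism φ : Γ → ℝ and every bounded function b : Γ → ℝ the function h_t − φ − b is unbounded on Γ.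 -/

import Mathlib

/-!
Each `H_i` induces a quasimorphism `μ ↦ ∑_B H_i(ρ_μ(B))` of `Γ` of defect at most `K·D`, because
`ρ` is a cocycle: `ρ_{μν}(B) = ρ_μ(B)·ρ_ν(B·π(μ))`, and `B ↦ B·π(μ)` permutes `Q`. The pointwise
bound on the `H_i` makes the `ℓ¹` combination `h_t` converge, with defect at most `K·D·‖t‖₁`.
For unboundedness let `i₀` be the first index with `t_{i₀} ≠ 0` and evaluate at `μ = f_{i₀}^d ∈ N`:
the terms `i > i₀` vanish by (a), so `h_t(μ) = t_{i₀}·∑_B H_{i₀}(s(B) μ s(B)⁻¹)`, a sum of non-negative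
terms by (b) containing `H_{i₀}(f_{i₀}^d)` (the term `B = 1`), which is unbounded in `d` by (c).
Homomorphisms to `ℝ` vanish on `μ ∈ [N,N] ≤ [Γ,Γ]`, so subtracting `φ` and a bounded `b` cannot help.
-/

open Finset

theorem abs_sum_sub_sub_le_card_mul {Γ Q G : Type*} [Mul Γ] [Group Q] [Fintype Q] [Mul G]
    {p : Γ → Q} {ρ : Γ → Q → G} (hρ : ∀ μ ν B, ρ (μ * ν) B = ρ μ B * ρ ν (B * p μ))
    {H : G → ℝ} {D : ℝ} (hH : ∀ a b, |H (a * b) - H a - H b| ≤ D) (μ ν : Γ) :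
    |∑ B, H (ρ (μ * ν) B) - ∑ B, H (ρ μ B) - ∑ B, H (ρ ν B)| ≤ Fintype.card Q * D := by
  rw [← Equiv.sum_comp (Equiv.mulRight (p μ)) (fun B => H (ρ ν B)), ← sum_sub_distrib,
    ← sum_sub_distrib]
  calc _ ≤ ∑ B, |H (ρ (μ * ν) B) - H (ρ μ B) - H (ρ ν (B * p μ))| := abs_sum_le_sum_abs _ _
    _ ≤ ∑ _B : Q, D := sum_le_sum fun B _ => hρ μ ν B ▸ hH _ _
    _ = Fintype.card Q * D := by rw [sum_const, card_univ, nsmul_eq_mul]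

section WeightedSeries

variable {ι : Type*} {t : ι → ℝ}

theorem summable_abs_mul_of_abs_le (ht : Summable fun i => |t i|) {u : ι → ℝ} {C : ℝ}
    (hu : ∀ i, |u i| ≤ C) : Summable fun i => |t i * u i| :=
  (ht.mul_right C).of_nonneg_of_le (fun _ => abs_nonneg _) fun i => by
    rw [abs_mul]; exact mul_le_mul_of_nonneg_left (hu i) (abs_nonneg _)

theorem abs_tsum_mul_sub_sub_le (ht : Summable fun i => |t i|) {a b c : ι → ℝ}
    (ha : Summable fun i => t i * a i) (hb : Summable fun i => t i * b i)
    (hc : Summable fun i => t i * c i) {E : ℝ} (h : ∀ i, |a i - b i - c i| ≤ E) :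
    |∑' i, t i * a i - ∑' i, t i * b i - ∑' i, t i * c i| ≤ E * ∑' i, |t i| := by
  have hterm : ∀ i, |t i * a i - t i * b i - t i * c i| ≤ |t i| * E := fun i => by
    rw [← mul_sub, ← mul_sub, abs_mul]; exact mul_le_mul_of_nonneg_left (h i) (abs_nonneg _)
  have hsum := (ht.mul_right E).of_nonneg_of_le (fun _ => abs_nonneg _) hterm
  rw [← ha.tsum_sub hb, ← (ha.sub hb).tsum_sub hc, mul_comm, ← tsum_mul_right]
  calc _ ≤ ∑' i, |t i * a i - t i * b i - t i * c i| :=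
        norm_tsum_le_tsum_norm (f := fun i => t i * a i - t i * b i - t i * c i) hsum
    _ ≤ ∑' i, |t i| * E := hsum.tsum_le_tsum hterm (ht.mul_right E)

end WeightedSeries

theorem tsum_mul_eq_of_eq_zero_of_lt_of_gt {t u : ℕ → ℝ} {i₀ : ℕ} (ht : ∀ i < i₀, t i = 0)
    (hu : ∀ i, i₀ < i → u i = 0) : ∑' i, t i * u i = t i₀ * u i₀ :=
  tsum_eq_single i₀ fun i hi => (lt_or_gt_of_ne hi).elim
    (fun hlt => by rw [ht i hlt, zero_mul]) fun hgt => by rw [hu i hgt, mul_zero]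

theorem eq_zero_of_mem_commutator {Γ : Type*} [Group Γ] {φ : Γ → ℝ}
    (hφ : ∀ a b : Γ, φ (a * b) = φ a + φ b) {x : Γ} (hx : x ∈ commutator Γ) : φ x = 0 :=
  Abelianization.commutator_subset_ker
    (MonoidHom.mk' (fun g => Multiplicative.ofAdd (φ g)) fun a b => by simp [hφ a b]) hx

theorem coe_mem_commutator_of_mem_commutator {Γ : Type*} [Group Γ] {N : Subgroup Γ}
    {x : N} (hx : x ∈ _root_.commutator N) : (x : Γ) ∈ _root_.commutator Γ := by
  have hmap : (x : Γ) ∈ (_root_.commutator N).map N.subtype := ⟨x, hx, rfl⟩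
  rw [N.map_subtype_commutator] at hmap
  exact Subgroup.commutator_mono le_top le_top hmap

theorem exists_lt_abs_sub_sub_of_unbounded_on_ker {Γ : Type*} {h φ b : Γ → ℝ}
    (hb : ∃ C, ∀ γ, |b γ| ≤ C) (hh : ∀ A, ∃ μ, φ μ = 0 ∧ A ≤ |h μ|) (A : ℝ) :
    ∃ μ, A < |h μ - φ μ - b μ| := by
  obtain ⟨C, hC⟩ := hb
  obtain ⟨μ, hφμ, hμ⟩ := hh (A + C + 1)
  refine ⟨μ, ?_⟩
  have := abs_sub_abs_le_abs_sub (h μ) (b μ)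
  rw [hφμ, sub_zero]
  linarith [hC μ]

section Transversal

variable {Γ : Type*} [Group Γ] {N : Subgroup Γ} [N.Normal] {s : Γ ⧸ N → Γ} {ρ : Γ → Γ ⧸ N → N}

theorem rho_mul
    (hρ : ∀ (μ : Γ) (B : Γ ⧸ N),
      (ρ μ B : Γ) = s B * μ * (s (B * (QuotientGroup.mk μ : Γ ⧸ N)))⁻¹)
    (μ ν : Γ) (B : Γ ⧸ N) :
    ρ (μ * ν) B = ρ μ B * ρ ν (B * (QuotientGroup.mk μ : Γ ⧸ N)) := by
  apply Subtype.ext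
  rw [Subgroup.coe_mul, hρ, hρ, hρ, QuotientGroup.mk_mul, ← mul_assoc B]
  group

theorem coe_rho_of_mem
    (hρ : ∀ (μ : Γ) (B : Γ ⧸ N),
      (ρ μ B : Γ) = s B * μ * (s (B * (QuotientGroup.mk μ : Γ ⧸ N)))⁻¹)
    {μ : Γ} (hμ : μ ∈ N) (B : Γ ⧸ N) :
    (ρ μ B : Γ) = s B * μ * (s B)⁻¹ := by
  rw [hρ, (QuotientGroup.eq_one_iff μ).2 hμ, mul_one]

theorem rho_one_of_mem
    (hρ : ∀ (μ : Γ) (B : Γ ⧸ N),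
      (ρ μ B : Γ) = s B * μ * (s (B * (QuotientGroup.mk μ : Γ ⧸ N)))⁻¹)
    (hs1 : s 1 = 1) (ν : N) : ρ ν 1 = ν := by
  ext
  rw [coe_rho_of_mem hρ ν.2, hs1, one_mul, inv_one, mul_one]

theorem abs_mul_le_abs_tsum_rho_pow [Fintype (Γ ⧸ N)]
    (hρ : ∀ (μ : Γ) (B : Γ ⧸ N),
      (ρ μ B : Γ) = s B * μ * (s (B * (QuotientGroup.mk μ : Γ ⧸ N)))⁻¹)
    (hs1 : s 1 = 1) {H : ℕ → N → ℝ} {f : ℕ → N}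
    (hzero : ∀ i j : ℕ, j < i → ∀ B : Γ ⧸ N, ∀ d : ℕ, 1 ≤ d → ∀ ν : N,
      (ν : Γ) = s B * (↑(f j ^ d) : Γ) * (s B)⁻¹ → H i ν = 0)
    (hnonneg : ∀ i : ℕ, ∀ B : Γ ⧸ N, ∀ d : ℕ, 1 ≤ d → ∀ ν : N,
      (ν : Γ) = s B * (↑(f i ^ d) : Γ) * (s B)⁻¹ → 0 ≤ H i ν)
    {t : ℕ → ℝ} {i₀ : ℕ} (ht : ∀ i < i₀, t i = 0) {d : ℕ} (hd : 1 ≤ d) :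
    |t i₀| * H i₀ (f i₀ ^ d) ≤ |∑' i, t i * ∑ B : Γ ⧸ N, H i (ρ (f i₀ ^ d : N) B)| := by
  have hconj (B : Γ ⧸ N) : (ρ (f i₀ ^ d : N) B : Γ) = s B * (↑(f i₀ ^ d) : Γ) * (s B)⁻¹ :=
    coe_rho_of_mem hρ (f i₀ ^ d : N).2 B
  have hnn (B : Γ ⧸ N) : 0 ≤ H i₀ (ρ (f i₀ ^ d : N) B) := hnonneg i₀ B d hd _ (hconj B)
  rw [tsum_mul_eq_of_eq_zero_of_lt_of_gt ht
      fun i hi => sum_eq_zero fun B _ => hzero i i₀ hi B d hd _ (hconj B),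
    abs_mul, abs_of_nonneg (sum_nonneg fun B _ => hnn B)]
  gcongr
  calc H i₀ (f i₀ ^ d) = H i₀ (ρ (f i₀ ^ d : N) 1) := by rw [rho_one_of_mem hρ hs1]
    _ ≤ ∑ B, H i₀ (ρ (f i₀ ^ d : N) B) := single_le_sum (fun B _ => hnn B) (mem_univ 1)

end Transversal

theorem global_wwpd_algebraic_core_general
    {Γ : Type*} [Group Γ] (N : Subgroup Γ) [N.Normal] [Fintype (Γ ⧸ N)]
    (K : ℕ) (hK : Fintype.card (Γ ⧸ N) = K)
    (s : Γ ⧸ N → Γ)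
    (hs1 : s 1 = 1)
    (ρ : Γ → Γ ⧸ N → N)
    (hρ : ∀ (μ : Γ) (B : Γ ⧸ N),
      (ρ μ B : Γ) = s B * μ * (s (B * (QuotientGroup.mk μ : Γ ⧸ N)))⁻¹)
    (D : ℝ)
    (H : ℕ → N → ℝ)
    (hdefect : ∀ (i : ℕ) (a b : N), |H i (a * b) - H i a - H i b| ≤ D)
    (hbdd : ∀ ν : N, ∃ C : ℝ, ∀ i : ℕ, |H i ν| ≤ C)
    (f : ℕ → N) (hf : ∀ i : ℕ, f i ∈ commutator ↥N)
    -- (a) vanishing on conjugates for `i > j`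
    (hzero : ∀ i j : ℕ, j < i → ∀ B : Γ ⧸ N, ∀ d : ℕ, 1 ≤ d → ∀ ν : N,
      (ν : Γ) = s B * (↑(f j ^ d) : Γ) * (s B)⁻¹ → H i ν = 0)
    -- (b) non-negativity on conjugates on the diagonal
    (hnonneg : ∀ i : ℕ, ∀ B : Γ ⧸ N, ∀ d : ℕ, 1 ≤ d → ∀ ν : N,
      (ν : Γ) = s B * (↑(f i ^ d) : Γ) * (s B)⁻¹ → 0 ≤ H i ν)
    -- (c) unboundedness on the diagonal
    (hunbdd : ∀ i : ℕ, ∀ A : ℝ, ∃ d : ℕ, 1 ≤ d ∧ A ≤ H i (f i ^ d))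
    (t : ℕ → ℝ) (ht : Summable fun i => |t i|) (htne : ∃ i : ℕ, t i ≠ 0) :
    -- well-definedness: absolute convergence of the series defining `h_t`
    (∀ μ : Γ, Summable fun i => |t i * ∑ B : Γ ⧸ N, H i (ρ μ B)|) ∧
    -- `h_t` is a quasimorphism with defect at most `K·D·∑_i |t_i|`
    (∀ μ ν : Γ,
      |(∑' i, t i * ∑ B : Γ ⧸ N, H i (ρ (μ * ν) B)) -
        (∑' i, t i * ∑ B : Γ ⧸ N, H i (ρ μ B)) -
        (∑' i, t i * ∑ B : Γ ⧸ N, H i (ρ ν B))| ≤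
        (K : ℝ) * D * ∑' i, |t i|) ∧
    -- `h_t − φ − b` is unbounded for every homomorphism `φ` and bounded `b`
    (∀ φ : Γ → ℝ, (∀ a b : Γ, φ (a * b) = φ a + φ b) →
      ∀ b : Γ → ℝ, (∃ Cb : ℝ, ∀ γ : Γ, |b γ| ≤ Cb) →
      ∀ A : ℝ, ∃ μ : Γ,
        A < |(∑' i, t i * ∑ B : Γ ⧸ N, H i (ρ μ B)) - φ μ - b μ|) := by
  choose C hC using hbdd
  have hS (μ : Γ) : Summable fun i => |t i * ∑ B : Γ ⧸ N, H i (ρ μ B)| :=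
    summable_abs_mul_of_abs_le ht fun i =>
      (abs_sum_le_sum_abs _ _).trans (sum_le_sum fun B _ => hC (ρ μ B) i)
  refine ⟨hS, fun μ ν => ?_, fun φ hφ b hb => ?_⟩
  · rw [← hK]
    exact abs_tsum_mul_sub_sub_le ht (hS _).of_abs (hS _).of_abs (hS _).of_abs
      fun i => abs_sum_sub_sub_le_card_mul (rho_mul hρ) (hdefect i) μ ν
  refine exists_lt_abs_sub_sub_of_unbounded_on_ker hb fun A => ?_
  set i₀ := Nat.find htne
  have hpos : 0 < |t i₀| := abs_pos.2 (Nat.find_spec htne)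
  obtain ⟨d, hd, hdA⟩ := hunbdd i₀ (A / |t i₀|)
  refine ⟨(f i₀ ^ d : N), eq_zero_of_mem_commutator hφ
    (coe_mem_commutator_of_mem_commutator (Subgroup.pow_mem _ (hf i₀) d)), ?_⟩
  calc A = |t i₀| * (A / |t i₀|) := by field_simp
    _ ≤ |t i₀| * H i₀ (f i₀ ^ d) := by gcongr
    _ ≤ _ := abs_mul_le_abs_tsum_rho_pow hρ hs1 hzero hnonneg
        (fun i hi => not_not.1 (Nat.find_min htne hi)) hd

/-- **Algebraic core of the Global WWPD Theorem.**
Let `N ⊴ Γ` have finite index `K`, with finite quotient `Q = Γ ⧸ N`,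
projection `π`, section `s` (with `s 1 = 1`), and `ρ_μ(B) = s(B)·μ·s(B·π(μ))⁻¹ ∈ N`.
Let `(H_i)` be quasimorphisms on `N` of defect at most `D`, pointwise uniformly
bounded, and let `(f_i)` be elements of `[N,N]` such that:
(a) `H_i` vanishes on `s(B)·f_j^d·s(B)⁻¹` for `i > j`, `d ≥ 1`;
(b) `H_i` is non-negative on `s(B)·f_i^d·s(B)⁻¹` for `d ≥ 1`;
(c) `sup_{d ≥ 1} H_i(f_i^d) = ∞`.
Then for every nonzero `ℓ¹` sequence `t`, the function
`h_t(μ) = ∑_i t_i·∑_{B ∈ Q} H_i(ρ_μ(B))` is well defined, a quasimorphism of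
defect at most `K·D·∑_i |t_i|`, and differs from every sum of a homomorphism
`Γ → ℝ` and a bounded function by an unbounded amount. -/
theorem global_wwpd_algebraic_core
    {Γ : Type*} [Group Γ] (N : Subgroup Γ) [N.Normal] [Fintype (Γ ⧸ N)]
    (K : ℕ) (hK : Fintype.card (Γ ⧸ N) = K)
    (s : Γ ⧸ N → Γ)
    (hs : ∀ B : Γ ⧸ N, (QuotientGroup.mk (s B) : Γ ⧸ N) = B)
    (hs1 : s 1 = 1)
    (ρ : Γ → Γ ⧸ N → N)
    (hρ : ∀ (μ : Γ) (B : Γ ⧸ N),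
      (ρ μ B : Γ) = s B * μ * (s (B * (QuotientGroup.mk μ : Γ ⧸ N)))⁻¹)
    (D : ℝ) (hD0 : 0 ≤ D)
    (H : ℕ → N → ℝ)
    (hdefect : ∀ (i : ℕ) (a b : N), |H i (a * b) - H i a - H i b| ≤ D)
    (hbdd : ∀ ν : N, ∃ C : ℝ, ∀ i : ℕ, |H i ν| ≤ C)
    (f : ℕ → N) (hf : ∀ i : ℕ, f i ∈ commutator ↥N)
    -- (a) vanishing on conjugates for `i > j`
    (hzero : ∀ i j : ℕ, j < i → ∀ B : Γ ⧸ N, ∀ d : ℕ, 1 ≤ d → ∀ ν : N,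
      (ν : Γ) = s B * (↑(f j ^ d) : Γ) * (s B)⁻¹ → H i ν = 0)
    -- (b) non-negativity on conjugates on the diagonal
    (hnonneg : ∀ i : ℕ, ∀ B : Γ ⧸ N, ∀ d : ℕ, 1 ≤ d → ∀ ν : N,
      (ν : Γ) = s B * (↑(f i ^ d) : Γ) * (s B)⁻¹ → 0 ≤ H i ν)
    -- (c) unboundedness on the diagonal
    (hunbdd : ∀ i : ℕ, ∀ A : ℝ, ∃ d : ℕ, 1 ≤ d ∧ A ≤ H i (f i ^ d))
    (t : ℕ → ℝ) (ht : Summable fun i => |t i|) (htne : ∃ i : ℕ, t i ≠ 0) :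
    -- well-definedness: absolute convergence of the series defining `h_t`
    (∀ μ : Γ, Summable fun i => |t i * ∑ B : Γ ⧸ N, H i (ρ μ B)|) ∧
    -- `h_t` is a quasimorphism with defect at most `K·D·∑_i |t_i|`
    (∀ μ ν : Γ,
      |(∑' i, t i * ∑ B : Γ ⧸ N, H i (ρ (μ * ν) B)) -
        (∑' i, t i * ∑ B : Γ ⧸ N, H i (ρ μ B)) -
        (∑' i, t i * ∑ B : Γ ⧸ N, H i (ρ ν B))| ≤
        (K : ℝ) * D * ∑' i, |t i|) ∧
    -- `h_t − φ − b` is unbounded for every homomorphism `φ` and bounded `b`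
    (∀ φ : Γ → ℝ, (∀ a b : Γ, φ (a * b) = φ a + φ b) →
      ∀ b : Γ → ℝ, (∃ Cb : ℝ, ∀ γ : Γ, |b γ| ≤ Cb) →
      ∀ A : ℝ, ∃ μ : Γ,
        A < |(∑' i, t i * ∑ B : Γ ⧸ N, H i (ρ μ B)) - φ μ - b μ|) :=
  global_wwpd_algebraic_core_general N K hK s hs1 ρ hρ D H hdefect hbdd f hf hzero hnonneg hunbdd t
    ht htne
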